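/- arXiv:2601.16548 — 5 statements merged into one kernel-verified Lean document; each statement's English description precedes it below -/
import Mathlib

section
/- Let $R:\mathbb{R}\to\mathbb{R}$ be a differentiable function of $s$ (for fixed $t$, $n$), and define $r(s) := \tfrac14[R'(s)+(2s-t-R(s))R(s)]$. If $r$ satisfies $r'(s) = \tfrac{2r(s)^2}{R(s)} - R(s)(r(s)+n)$ and $R(s)\neq 0$, then $R''(s) = \tfrac{(R'(s))^2}{2R(s)} + \tfrac32 R(s)^3 - (4s-2t)R(s)^2 + \big(2s^2 - 4n - 2 - 2st + \tfrac12 t^2\big)R(s)$. -/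
/-! Differentiating the formula for `r` expresses `r'` through `R`, `R'`, `R''`; substituting this
into the Riccati equation for `r` and clearing the denominator `R` leaves an equation that is
linear in `R''`. -/

theorem HasDerivAt.riccati_auxiliary {R R₁ : ℝ → ℝ} {a b t s : ℝ}
    (hR : HasDerivAt R a s) (hR₁ : HasDerivAt R₁ b s) :
    HasDerivAt (fun s => (1 / 4) * (R₁ s + (2 * s - t - R s) * R s))
      ((1 / 4) * (b + ((2 - a) * R s + (2 * s - t - R s) * a))) s := by
  have hlin : HasDerivAt (fun s => 2 * s - t - R s) (2 - a) s :=
    ((((hasDerivAt_id s).const_mul 2).sub_const t).sub hR).congr_deriv (by ring)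
  exact (hR₁.add (hlin.mul hR)).const_mul (1 / 4)

theorem second_order_of_riccati_system {t n s R R₁ R₂ r r₁ : ℝ} (hR : R ≠ 0)
    (hr : r = (1 / 4) * (R₁ + (2 * s - t - R) * R))
    (hr₁ : r₁ = (1 / 4) * (R₂ + ((2 - R₁) * R + (2 * s - t - R) * R₁)))
    (hric : r₁ = 2 * r ^ 2 / R - R * (r + n)) :
    R₂ = R₁ ^ 2 / (2 * R) + (3 / 2) * R ^ 3 - (4 * s - 2 * t) * R ^ 2
      + (2 * s ^ 2 - 4 * n - 2 - 2 * s * t + (1 / 2) * t ^ 2) * R := by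
  subst hr
  rw [hr₁] at hric
  field_simp at hric ⊢
  linear_combination hric / 2

theorem stmt_3 (t n : ℝ) (R r : ℝ → ℝ)
    (hR : Differentiable ℝ R) (hR' : Differentiable ℝ (deriv R))
    (hRne : ∀ s, R s ≠ 0)
    (hr : ∀ s, r s = (1 / 4) * (deriv R s + (2 * s - t - R s) * R s))
    (hric : ∀ s, deriv r s = 2 * (r s) ^ 2 / R s - R s * (r s + n)) :
    ∀ s, deriv (deriv R) s = (deriv R s) ^ 2 / (2 * R s) + (3 / 2) * (R s) ^ 3
      - (4 * s - 2 * t) * (R s) ^ 2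
      + (2 * s ^ 2 - 4 * n - 2 - 2 * s * t + (1 / 2) * t ^ 2) * R s := by
  intro s
  have hr₁ : deriv r s = (1 / 4) * (deriv (deriv R) s
      + ((2 - deriv R s) * R s + (2 * s - t - R s) * deriv R s)) := by
    rw [funext hr]
    exact ((hR s).hasDerivAt.riccati_auxiliary (hR' s).hasDerivAt).deriv
  exact second_order_of_riccati_system (hRne s) (hr s) hr₁ (hric s)
end

section
/- Let $R:\mathbb{R}\to\mathbb{R}$ be twice differentiable in $t$ (for fixed $s,n$), and define $r(t):=\tfrac14 R(t)(2s-t-R(t)) - \tfrac12 R'(t)$. If $r'(t) = -\tfrac{r(t)^2}{R(t)} + \tfrac12 R(t)(r(t)+n)$ and $R(t)\neq 0$, then $R''(t) = \tfrac{(R'(t))^2}{2R(t)} + \tfrac38 R(t)^3 - (s-\tfrac12 t)R(t)^2 + \big(\tfrac12 s^2 - n - \tfrac12 - \tfrac12 st + \tfrac18 t^2\big)R(t)$. -/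
/-! Differentiating the defining relation of `r` expresses `r'` through `R''`; substituting this
and `r` into the Riccati equation for `r` and clearing the denominator `R` leaves an equation
linear in `R''`. -/

theorem hasDerivAt_quarter_mul_sub_half {R R' : ℝ → ℝ} {R'' : ℝ} (s t : ℝ)
    (hR : HasDerivAt R (R' t) t) (hR' : HasDerivAt R' R'' t) :
    HasDerivAt (fun t => (1 / 4) * R t * (2 * s - t - R t) - (1 / 2) * R' t)
      ((1 / 4) * (R' t * (2 * s - t - R t) - R t * (1 + R' t)) - (1 / 2) * R'') t := by
  have hlin : HasDerivAt (fun t => 2 * s - t - R t) (-1 - R' t) t :=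
    ((hasDerivAt_id' t).const_sub (2 * s)).sub hR
  refine (((hR.const_mul (1 / 4)).mul hlin).sub (hR'.const_mul (1 / 2))).congr_deriv ?_
  ring

theorem second_deriv_eq_of_riccati {s n t R R' R'' : ℝ} (hR : R ≠ 0)
    (h : (1 / 4) * (R' * (2 * s - t - R) - R * (1 + R')) - (1 / 2) * R''
      = -((1 / 4) * R * (2 * s - t - R) - (1 / 2) * R') ^ 2 / R
        + (1 / 2) * R * ((1 / 4) * R * (2 * s - t - R) - (1 / 2) * R' + n)) :
    R'' = R' ^ 2 / (2 * R) + (3 / 8) * R ^ 3 - (s - (1 / 2) * t) * R ^ 2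
      + ((1 / 2) * s ^ 2 - n - 1 / 2 - (1 / 2) * s * t + (1 / 8) * t ^ 2) * R := by
  field_simp at h ⊢
  linear_combination (-1 / 2 : ℝ) * h

theorem stmt_4 (s n : ℝ) (R r : ℝ → ℝ)
    (hR : Differentiable ℝ R) (hR' : Differentiable ℝ (deriv R))
    (hRne : ∀ t, R t ≠ 0)
    (hr : ∀ t, r t = (1 / 4) * R t * (2 * s - t - R t) - (1 / 2) * deriv R t)
    (hric : ∀ t, deriv r t = -(r t) ^ 2 / R t + (1 / 2) * R t * (r t + n)) :
    ∀ t, deriv (deriv R) t = (deriv R t) ^ 2 / (2 * R t) + (3 / 8) * (R t) ^ 3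
      - (s - (1 / 2) * t) * (R t) ^ 2
      + ((1 / 2) * s ^ 2 - n - 1 / 2 - (1 / 2) * s * t + (1 / 8) * t ^ 2) * R t := by
  intro t
  have hr_deriv : HasDerivAt r
      ((1 / 4) * (deriv R t * (2 * s - t - R t) - R t * (1 + deriv R t))
        - (1 / 2) * deriv (deriv R) t) t := by
    rw [funext hr]
    exact hasDerivAt_quarter_mul_sub_half s t (hR t).hasDerivAt (hR' t).hasDerivAt
  apply second_deriv_eq_of_riccati (hRne t)
  rw [← hr_deriv.deriv, hric t, hr t]
end

section
/- Let $r:\mathbb{R}\to\mathbb{R}$ (function of $s$, for fixed $t,n$) be twice differentiable and satisfy $[\partial^2_{ss}r + 12r^2 + 8nr]^2 = (2s-t)^2[(\partial_s r)^2 + 8r^3 + 8nr^2]$. Define $V(\widetilde S) := -2r(\widetilde S + \tfrac12 t) - \tfrac{2n}{3}$. Then $V$ satisfies the Chazy II equation $[V'' - 6V^2 - \gamma_2]^2 = 4\widetilde S^2[(V')^2 - 4V^3 - 2\gamma_2 V - \eta_2]$ with $\gamma_2 = -\tfrac{8n^2}{3}$ and $\eta_2 = -\tfrac{64n^3}{27}$.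 -/
theorem stmt_7 (t n : ℝ) (r : ℝ → ℝ)
    (hr : Differentiable ℝ r) (hr' : Differentiable ℝ (deriv r))
    (heq : ∀ s, (deriv (deriv r) s + 12 * (r s) ^ 2 + 8 * n * r s) ^ 2 =
      (2 * s - t) ^ 2 * ((deriv r s) ^ 2 + 8 * (r s) ^ 3 + 8 * n * (r s) ^ 2)) :
    ∀ S : ℝ,
      (deriv (deriv (fun S => -2 * r (S + (1 / 2) * t) - 2 * n / 3)) S
          - 6 * (-2 * r (S + (1 / 2) * t) - 2 * n / 3) ^ 2 - (-(8 * n ^ 2) / 3)) ^ 2 =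
      4 * S ^ 2 * ((deriv (fun S => -2 * r (S + (1 / 2) * t) - 2 * n / 3) S) ^ 2
          - 4 * (-2 * r (S + (1 / 2) * t) - 2 * n / 3) ^ 3
          - 2 * (-(8 * n ^ 2) / 3) * (-2 * r (S + (1 / 2) * t) - 2 * n / 3)
          - (-(64 * n ^ 3) / 27)) := by
  intro S
  set c : ℝ := (1 / 2) * t with hc
  have hV : deriv (fun S => -2 * r (S + c) - 2 * n / 3)
      = fun S => -2 * deriv r (S + c) := by
    funext x
    have h1 : HasDerivAt (fun y : ℝ => y + c) 1 x := (hasDerivAt_id x).add_const c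
    have h2 := (((hr (x + c)).hasDerivAt.comp x h1).const_mul (-2)).sub_const (2 * n / 3)
    have := h2.deriv
    simp only [Function.comp] at this
    rw [this]; ring
  have hV2 : deriv (fun S => -2 * deriv r (S + c)) S = -2 * deriv (deriv r) (S + c) := by
    have h1 : HasDerivAt (fun y : ℝ => y + c) 1 S := (hasDerivAt_id S).add_const c
    have h2 := ((hr' (S + c)).hasDerivAt.comp S h1).const_mul (-2)
    have := h2.deriv
    simp only [Function.comp] at this
    rw [this]; ring
  rw [hV, hV2]
  have h := heq (S + c)
  rw [hc] at h
  linear_combination 4 * h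
end

section
/- For real $s < b$, $\displaystyle\int_s^b \frac{\ln(b-x)}{\sqrt{(b-x)(x-s)}}\,dx = \pi \ln\frac{b-s}{4}$. -/
/-!
The substitution `x = s + (b - s) sin² θ`, `θ ∈ (0, π/2)`, gives `b - x = (b - s) cos² θ` and
`√((b - x)(x - s)) = (b - s) sin θ cos θ`, which cancels against `dx = 2 (b - s) sin θ cos θ dθ`.
The integral becomes `∫₀^{π/2} (2 log (b - s) + 4 log cos θ) dθ = π log (b - s) - 2π log 2`.
-/

open Real Set intervalIntegral

theorem integral_log_cos_zero_pi_div_two : ∫ x in 0..(π / 2), log (cos x) = -log 2 * π / 2 := by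
  have h := integral_comp_sub_left (a := 0) (b := π / 2) (fun x ↦ log (sin x)) (π / 2)
  simp only [sub_self, sub_zero, sin_pi_div_two_sub] at h
  rw [h, integral_log_sin_zero_pi_div_two]

/-- Since the substitution is monotone, this holds for every `g`, integrable or not. -/
theorem integral_eq_integral_comp_sin_sq {s b : ℝ} (hsb : s ≤ b) (g : ℝ → ℝ) :
    ∫ x in s..b, g x =
      ∫ θ in 0..(π / 2), g (s + (b - s) * sin θ ^ 2) * ((b - s) * (2 * sin θ * cos θ)) := by
  have hderiv (θ : ℝ) :
      HasDerivAt (fun θ ↦ s + (b - s) * sin θ ^ 2) ((b - s) * (2 * sin θ * cos θ)) θ := by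
    refine ((((hasDerivAt_sin θ).fun_pow 2).const_mul (b - s)).const_add s).congr_deriv ?_
    push_cast
    ring
  have hderiv_nonneg :
      ∀ θ ∈ Ioo (min 0 (π / 2)) (max 0 (π / 2)), 0 ≤ (b - s) * (2 * sin θ * cos θ) := by
    intro θ hθ
    rw [min_eq_left pi_div_two_pos.le, max_eq_right pi_div_two_pos.le] at hθ
    have := sin_nonneg_of_nonneg_of_le_pi hθ.1.le (by linarith [hθ.2, pi_pos])
    have := cos_nonneg_of_mem_Icc ⟨by linarith [hθ.1, pi_pos], hθ.2.le⟩
    have := sub_nonneg.2 hsb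
    positivity
  simpa using (integral_comp_mul_deriv_of_deriv_nonneg (g := g)
    (fun θ _ ↦ (hderiv θ).continuousAt.continuousWithinAt) (fun θ _ ↦ hderiv θ)
    hderiv_nonneg).symm

theorem log_div_sqrt_mul_deriv_eq_of_eq_sin_sq {s b x θ : ℝ} (hsb : s < b)
    (hθ : θ ∈ Ioo 0 (π / 2)) (hx : x = s + (b - s) * sin θ ^ 2) :
    log (b - x) / √((b - x) * (x - s)) * ((b - s) * (2 * sin θ * cos θ)) =
      2 * log (b - s) + 4 * log (cos θ) := by
  have hbs : 0 < b - s := sub_pos.2 hsb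
  have hsin : 0 < sin θ := sin_pos_of_pos_of_lt_pi hθ.1 (by linarith [hθ.2, pi_pos])
  have hcos : 0 < cos θ := cos_pos_of_mem_Ioo ⟨by linarith [hθ.1, pi_pos], hθ.2⟩
  have hbx : b - x = (b - s) * cos θ ^ 2 := by
    rw [hx]
    linear_combination (s - b) * sin_sq_add_cos_sq θ
  have hsqrt : √((b - x) * (x - s)) = (b - s) * sin θ * cos θ := by
    rw [hbx, hx, show (b - s) * cos θ ^ 2 * (s + (b - s) * sin θ ^ 2 - s) =
      ((b - s) * sin θ * cos θ) ^ 2 by ring]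
    exact sqrt_sq (by positivity)
  rw [hsqrt, hbx, log_mul hbs.ne' (by positivity), log_pow]
  field_simp
  push_cast
  ring

theorem stmt_16 (s b : ℝ) (hsb : s < b) :
    ∫ x in s..b, Real.log (b - x) / Real.sqrt ((b - x) * (x - s)) =
      Real.pi * Real.log ((b - s) / 4) := by
  have hlog_cos : IntervalIntegrable (fun θ ↦ log (cos θ)) MeasureTheory.volume 0 (π / 2) :=
    intervalIntegrable_log_cos
  rw [integral_eq_integral_comp_sin_sq hsb.le,
    integral_congr_Ioo_of_le pi_div_two_pos.le
      fun θ hθ ↦ log_div_sqrt_mul_deriv_eq_of_eq_sin_sq hsb hθ rfl,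
    integral_add intervalIntegrable_const (hlog_cos.const_mul 4), integral_const,
    integral_const_mul, integral_log_cos_zero_pi_div_two,
    log_div (sub_pos.2 hsb).ne' four_ne_zero, show (4 : ℝ) = 2 ^ 2 by norm_num, log_pow]
  simp only [sub_zero, smul_eq_mul]
  push_cast
  ring
end

section
/- Suppose sequences of differentiable functions $\alpha_n(s,t)$, $\beta_n(s,t)$, $r_n(s,t)$, $R_n(s,t)$ satisfy $R_n + t = 2\alpha_n$, $\partial_t \beta_n = \beta_n(\alpha_n - \alpha_{n-1})$, $r_n^2 = \beta_n R_n R_{n-1}$, $r_n + n = 2\beta_n$, and $\beta_n, R_n \neq 0$. Then $\partial_t r_n = -\dfrac{r_n^2}{R_n} + \dfrac12 R_n (r_n + n)$. -/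
theorem stmt_19 (n : ℕ) (α αm β r Rn Rm : ℝ → ℝ)
    (hβ : Differentiable ℝ β)
    (h1 : ∀ t, Rn t + t = 2 * α t)
    (h1' : ∀ t, Rm t + t = 2 * αm t)
    (h2 : ∀ t, deriv β t = β t * (α t - αm t))
    (h3 : ∀ t, (r t) ^ 2 = β t * (Rn t * Rm t))
    (h4 : ∀ t, r t + n = 2 * β t)
    (hβne : ∀ t, β t ≠ 0) (hRne : ∀ t, Rn t ≠ 0) :
    ∀ t, deriv r t = -(r t) ^ 2 / Rn t + (1 / 2) * Rn t * (r t + n) := by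
  have hr : r = fun t => 2 * β t - n := by
    funext t; linarith [h4 t]
  intro t
  have hd : deriv r t = 2 * deriv β t := by
    rw [hr]
    have : deriv (fun t => 2 * β t - (n:ℝ)) t = deriv (fun t => 2 * β t) t := by
      simp [deriv_sub_const]
    rw [this, deriv_const_mul _ (hβ.differentiableAt)]
  rw [hd, h2 t]
  have hα : α t - αm t = (Rn t - Rm t) / 2 := by linarith [h1 t, h1' t]
  have hrm : -(r t) ^ 2 / Rn t = -(β t * Rm t) := by
    rw [h3 t]; field_simp [hRne t]
  rw [hα, hrm, h4 t]; ring
end
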